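/- arXiv:1702.03615 — 3 statements merged into one kernel-verified Lean document; each statement's English description precedes it below -/
import Mathlib

section
/- For every γ ∈ (0,1/2], η ∈ (0,1/2), and k = ⌈1/γ⌉, the inequality (1 - (1/2 - γ)η)^(2k) · (1 - η) > (1 - η)^k holds. -/
/-- For `γ ∈ (0,1/2]`, `η ∈ (0,1/2)`, and `k = ⌈1/γ⌉`,
`(1 - (1/2-γ)η)^(2k) (1-η) > (1-η)^k`. -/
theorem stmt_8 (γ η : ℝ) (hγ : γ ∈ Set.Ioc (0:ℝ) (1/2)) (hη : η ∈ Set.Ioo (0:ℝ) (1/2))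
    (k : ℕ) (hk : k = ⌈1/γ⌉₊) :
    (1 - (1/2 - γ) * η)^(2*k) * (1 - η) > (1 - η)^k := by
  obtain ⟨hγ0, hγ2⟩ := hγ
  obtain ⟨hη0, hη2⟩ := hη
  have hb : (0:ℝ) < 1 - η := by linarith
  have hk1 : (1/γ : ℝ) ≤ k := by rw [hk]; exact Nat.le_ceil _
  have hkγ : 1 ≤ (k:ℝ) * γ := by
    rw [div_le_iff₀ hγ0] at hk1; linarith
  have hk2 : 1 ≤ k := by
    rcases Nat.eq_zero_or_pos k with h | h
    · subst h; simp at hkγ; linarith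
    · exact h
  obtain ⟨m, rfl⟩ : ∃ m, k = m + 1 := ⟨k - 1, by omega⟩
  set a := 1 - (1/2 - γ) * η with ha
  set b := 1 - η with hbdef
  have h1 : b + γ * η < a ^ 2 := by
    rw [ha, hbdef]
    nlinarith [sq_nonneg ((1/2 - γ) * η), mul_pos hγ0 hη0]
  have hx0 : 0 ≤ γ * η / b := by positivity
  have hbern : 1 + ((m:ℝ)+1) * (γ * η / b) ≤ (1 + γ * η / b) ^ (m+1) := by
    have := one_add_mul_le_pow (a := γ * η / b) (by linarith) (m+1)
    push_cast at this ⊢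
    linarith
  have hstep1 : 1 + η / b ≤ 1 + ((m:ℝ)+1) * (γ * η / b) := by
    have hnum : η ≤ ((m:ℝ)+1) * (γ * η) := by
      have : ((m:ℝ)+1) = ((m+1 : ℕ) : ℝ) := by push_cast; ring
      nlinarith
    have h2 : η / b ≤ (((m:ℝ)+1) * (γ * η)) / b := by gcongr
    have h' : ((m:ℝ)+1) * (γ * η / b) = (((m:ℝ)+1) * (γ * η)) / b := by ring
    linarith [h' ▸ h2]
  have hpk : 0 < b ^ (m+1) := pow_pos hb (m+1)
  have hfac : (b + γ * η) ^ (m+1) = b ^ (m+1) * (1 + γ * η / b) ^ (m+1) := by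
    rw [← mul_pow]; congr 1; field_simp
  have hbm : b ^ m = b ^ (m+1) * (1 + η / b) := by
    have : b ^ (m+1) * (1 + η / b) = b ^ m * (b * (1 + η / b)) := by ring
    rw [this]
    have : b * (1 + η / b) = b + η := by field_simp
    rw [this]
    have : b + η = 1 := by rw [hbdef]; ring
    rw [this, mul_one]
  have hchain : b ^ m < a ^ (2 * (m+1)) := by
    calc b ^ m = b ^ (m+1) * (1 + η / b) := hbm
      _ ≤ b ^ (m+1) * (1 + ((m:ℝ)+1) * (γ * η / b)) :=
          mul_le_mul_of_nonneg_left hstep1 hpk.le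
      _ ≤ b ^ (m+1) * (1 + γ * η / b) ^ (m+1) :=
          mul_le_mul_of_nonneg_left hbern hpk.le
      _ = (b + γ * η) ^ (m+1) := hfac.symm
      _ < (a ^ 2) ^ (m+1) := by
          apply pow_lt_pow_left₀ h1 (by positivity) (by omega)
      _ = a ^ (2 * (m+1)) := by rw [← pow_mul]
  calc b ^ (m+1) = b ^ m * b := by ring
    _ < a ^ (2 * (m+1)) * b := mul_lt_mul_of_pos_right hchain hb
end

section
/- Let c ∈ (0,1) and η ∈ (0,1/2). For every integer t > c/(1-c), the inequality (1 - cη)^(t+1) > (1 - η)^t holds. -/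
/-- For `c ∈ (0,1)`, `η ∈ (0,1/2)`, and any integer `t > c/(1-c)`,
`(1-cη)^(t+1) > (1-η)^t`. -/
theorem stmt_14 (c η : ℝ) (hc : c ∈ Set.Ioo (0:ℝ) 1) (hη : η ∈ Set.Ioo (0:ℝ) (1/2))
    (t : ℕ) (ht : (t : ℝ) > c / (1 - c)) :
    (1 - c * η)^(t+1) > (1 - η)^t := by
  obtain ⟨hc0, hc1⟩ := hc
  obtain ⟨hη0, hη2⟩ := hη
  have ha : (0:ℝ) < 1 - η := by linarith
  have hcη : (0:ℝ) < 1 - c * η := by nlinarith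
  -- Bernoulli: (1-η)^c ≤ 1 - cη
  have key : (1 - η) ^ (c : ℝ) ≤ 1 - c * η := by
    have h := rpow_one_add_le_one_add_mul_self (s := -η) (by linarith) hc0.le hc1.le
    have : (1 + -η) ^ c ≤ 1 + c * -η := h
    rw [show (1 + -η) = 1 - η by ring] at this
    linarith [this]
  -- exponent comparison: (t+1)*c < t
  have htc : c < (t : ℝ) * (1 - c) := (div_lt_iff₀ (by linarith)).mp ht
  have hexp : ((t : ℝ) + 1) * c < (t : ℝ) := by nlinarith
  have h1 : (1 - η) ^ ((t : ℝ)) < (1 - η) ^ (((t : ℝ) + 1) * c) :=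
    Real.rpow_lt_rpow_of_exponent_gt ha (by linarith) hexp
  have h2 : (1 - η) ^ (((t : ℝ) + 1) * c) = ((1 - η) ^ (c : ℝ)) ^ (t + 1) := by
    rw [← Real.rpow_natCast ((1 - η) ^ (c : ℝ)) (t + 1), ← Real.rpow_mul ha.le]
    push_cast
    ring_nf
  have h3 : ((1 - η) ^ (c : ℝ)) ^ (t + 1) ≤ (1 - c * η) ^ (t + 1) :=
    pow_le_pow_left₀ (Real.rpow_nonneg ha.le c) key (t + 1)
  calc (1 - η) ^ t = (1 - η) ^ ((t : ℝ)) := by rw [Real.rpow_natCast]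
    _ < (1 - η) ^ (((t : ℝ) + 1) * c) := h1
    _ = ((1 - η) ^ (c : ℝ)) ^ (t + 1) := h2
    _ ≤ (1 - c * η) ^ (t + 1) := h3
end

section
/- For θ = 0.382 and p ∈ [θ, 1-θ], the Brier update value 1 - η·((p² + (1-p)² + 1)/2 - (1 - s)) with s = |p - r| ∈ [θ, 1-θ] satisfies 1 - η·((p²+(1-p)²+1)/2 - (1-s)) ≤ 1 - (η/2.62)·s. -/
/-- Pointwise bound for the Brier update with `θ = 0.382`: for `p, s = |p-r|` in
`[θ, 1-θ]`, `1 - η((p²+(1-p)²+1)/2 - (1-s)) ≤ 1 - (η/2.62) s`. -/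
theorem stmt_16 (η p r s : ℝ) (hη : η ∈ Set.Ioo (0:ℝ) (1/2)) (hr : r = 0 ∨ r = 1)
    (hp : p ∈ Set.Icc (0.382 : ℝ) (1 - 0.382))
    (hs : s = |p - r|) (hs' : s ∈ Set.Icc (0.382 : ℝ) (1 - 0.382)) :
    1 - η * ((p^2 + (1-p)^2 + 1) / 2 - (1 - s)) ≤ 1 - (η / 2.62) * s := by
  obtain ⟨hη0, hη1⟩ := hη
  obtain ⟨hp0, hp1⟩ := hp
  obtain ⟨hs0, hs1⟩ := hs'
  have hkey : s = p ∨ s = 1 - p := by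
    rcases hr with h | h <;> subst h <;> rw [hs]
    · left; rw [sub_zero, abs_of_nonneg (by linarith)]
    · right; rw [abs_of_nonpos (by linarith)]; ring
  rcases hkey with h | h
  · subst h
    have h1 : η * ((s ^ 2 + (1 - s) ^ 2 + 1) / 2 - (1 - s)) = (η * s) * s := by ring
    have h2 : (η / 2.62) * s = (η * s) * (1/2.62) := by ring
    have h3 : (η * s) * (1/2.62) ≤ (η * s) * s :=
      mul_le_mul_of_nonneg_left (by linarith) (by positivity)
    linarith
  · subst h
    have h1 : η * ((p ^ 2 + (1 - p) ^ 2 + 1) / 2 - (1 - (1 - p))) = (η * (1 - p)) * (1 - p) := by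
      ring
    have h2 : (η / 2.62) * (1 - p) = (η * (1 - p)) * (1/2.62) := by ring
    have h3 : (η * (1 - p)) * (1/2.62) ≤ (η * (1 - p)) * (1 - p) :=
      mul_le_mul_of_nonneg_left (by linarith) (by nlinarith)
    linarith
end
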